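/- In the ring of formal power series ℤ[[t]], Π_{r=0}^∞ 1/((1−t^{5r+1})(1−t^{5r+4})) = (Σ_{m∈ℤ} (−1)^m t^{m(5m−1)/2}) · Π_{i=1}^∞ 1/(1−t^i), where the bilateral sum over all integers m and the infinite products converge in the t-adic topology. -/

import Mathlib

namespace RR

/-- The `i`-th part (1-indexed) of a partition given as a list of parts;
`λ_i = 0` for `i` beyond the number of parts. -/
def part (l : List ℕ) (i : ℕ) : ℕ := l.getD (i - 1) 0

/-- `l` is a partition: a weakly decreasing list of positive integers. -/
def IsPartition (l : List ℕ) : Prop := l.Pairwise (· ≥ ·) ∧ ∀ x ∈ l, 0 < x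

/-- `l` is a partition of `n`. -/
def IsPartitionOf (n : ℕ) (l : List ℕ) : Prop := IsPartition l ∧ l.sum = n

/-- A Rogers-Ramanujan partition: the smallest part is at least the number of parts. -/
def IsRR (l : List ℕ) : Prop := ∀ x ∈ l, l.length ≤ x

/-- Height `s_m(λ)` of the first `m`-Durfee rectangle: the largest `h ≥ max(m,1)`
with `λ_h ≥ h - m`. -/
noncomputable def sD (m : ℕ) (l : List ℕ) : ℕ := sSup {h : ℕ | max m 1 ≤ h ∧ h - m ≤ part l h}

/-- Height `t_m(λ)` of the second `m`-Durfee rectangle: the largest `h ≥ max(m,1)`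
with `λ_{s+h} ≥ h - m`, where `s = s_m(λ)`. -/
noncomputable def tD (m : ℕ) (l : List ℕ) : ℕ :=
  sSup {h : ℕ | max m 1 ≤ h ∧ h - m ≤ part l (sD m l + h)}

/-- `γ′₁`: the number of indices `i ≥ 1` with `λ_{s+t+i} > 0`. -/
noncomputable def gamma1 (m : ℕ) (l : List ℕ) : ℕ :=
  {i : ℕ | 1 ≤ i ∧ 0 < part l (sD m l + tD m l + i)}.ncard

/-- The `(2,m)`-rank: `r_{2,m}(λ) = β₁ + α_{s-t-β₁+1} - γ′₁`, where
`β₁ = λ_{s+1} - (t - m)` and `α_i = λ_i - (s - m)`. -/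
noncomputable def rank2 (m : ℕ) (l : List ℕ) : ℤ :=
  let s := sD m l
  let t := tD m l
  let b1 := part l (s + 1) - (t - m)
  (b1 : ℤ) + ((part l (s - t - b1 + 1) : ℤ) - ((s - m : ℕ) : ℤ)) - (gamma1 m l : ℤ)

/-- `p n`: the number of partitions of `n`. -/
noncomputable def p (n : ℕ) : ℕ := {l : List ℕ | IsPartitionOf n l}.ncard

/-- `q n`: the number of Rogers-Ramanujan partitions of `n`. -/
noncomputable def q (n : ℕ) : ℕ := {l : List ℕ | IsPartitionOf n l ∧ IsRR l}.ncard

/-- The number of partitions of `n` whose `(2,m)`-rank satisfies the predicate `P`;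
for `m = 0` only non-Rogers-Ramanujan partitions are counted. -/
noncomputable def hC (n m : ℕ) (P : ℤ → Prop) : ℕ :=
  {l : List ℕ | IsPartitionOf n l ∧ (m = 0 → ¬ IsRR l) ∧ P (rank2 m l)}.ncard

/-- `p` extended to `ℤ` by `0` on negative integers. -/
noncomputable def pZ (k : ℤ) : ℤ := if 0 ≤ k then (p k.toNat : ℤ) else 0


open PowerSeries

/-- The `t`-adic topology on `ℤ⟦X⟧`: the product topology of the discrete topologies on
the coefficients (these coincide since `ℤ` is discrete). -/
noncomputable instance : TopologicalSpace (PowerSeries ℤ) :=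
  @Pi.topologicalSpace (Unit →₀ ℕ) (fun _ => ℤ) (fun _ => ⊥)

lemma app_eq (f : PowerSeries ℤ) (d : Unit →₀ ℕ) : MvPowerSeries.coeff d f = coeff (d ()) f := by
  rw [coeff_def rfl]

lemma tendsto_iff {β : Type*} (l : Filter β) (f : β → PowerSeries ℤ) (a : PowerSeries ℤ) :
    Filter.Tendsto f l (nhds a) ↔ ∀ d : Unit →₀ ℕ, ∀ᶠ b in l, MvPowerSeries.coeff d (f b) = MvPowerSeries.coeff d a := by
  refine (tendsto_pi_nhds (A := fun _ : Unit →₀ ℕ => ℤ) (T := fun _ => ⊥) (f := f) (g := a)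
    (u := l)).trans ?_
  refine forall_congr' fun d => ?_
  letI : TopologicalSpace ℤ := ⊥
  haveI : DiscreteTopology ℤ := ⟨rfl⟩
  rw [nhds_discrete]
  exact Filter.tendsto_pure

lemma hasProd_iff {ι : Type*} (f : ι → PowerSeries ℤ) (a : PowerSeries ℤ) :
    HasProd f a ↔ ∀ n : ℕ, ∃ s₀ : Finset ι, ∀ s : Finset ι, s₀ ⊆ s →
      coeff n (∏ i ∈ s, f i) = coeff n a := by
  rw [HasProd, tendsto_iff]
  constructor
  · intro h n
    obtain ⟨s₀, hs₀⟩ := (Filter.eventually_atTop).1 (h (Finsupp.single () n))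
    refine ⟨s₀, fun s hs => ?_⟩
    have := hs₀ s hs
    rw [app_eq (∏ b ∈ s, f b) _, app_eq a _] at this
    simpa using this
  · intro h d
    refine Filter.eventually_atTop.2 ?_
    obtain ⟨s₀, hs₀⟩ := h (d ())
    exact ⟨s₀, fun s hs => by
      rw [app_eq (∏ b ∈ s, f b) d, app_eq a d]; exact hs₀ s hs⟩

lemma hasSum_iff {ι : Type*} (f : ι → PowerSeries ℤ) (a : PowerSeries ℤ) :
    HasSum f a ↔ ∀ n : ℕ, ∃ s₀ : Finset ι, ∀ s : Finset ι, s₀ ⊆ s →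
      coeff n (∑ i ∈ s, f i) = coeff n a := by
  rw [HasSum, tendsto_iff]
  constructor
  · intro h n
    obtain ⟨s₀, hs₀⟩ := (Filter.eventually_atTop).1 (h (Finsupp.single () n))
    refine ⟨s₀, fun s hs => ?_⟩
    have := hs₀ s hs
    rw [app_eq (∑ b ∈ s, f b) _, app_eq a _] at this
    simpa using this
  · intro h d
    refine Filter.eventually_atTop.2 ?_
    obtain ⟨s₀, hs₀⟩ := h (d ())
    exact ⟨s₀, fun s hs => by
      rw [app_eq (∑ b ∈ s, f b) d, app_eq a d]; exact hs₀ s hs⟩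

lemma tprod_eq {ι : Type*} {f : ι → PowerSeries ℤ} {a : PowerSeries ℤ} (h : HasProd f a) :
    ∏' i, f i = a := by
  classical
  have hm : Multipliable f := ⟨a, h⟩
  have h2 : HasProd f (∏' i, f i) := hm.hasProd
  rw [hasProd_iff] at h h2
  ext n
  obtain ⟨s₀, hs₀⟩ := h n
  obtain ⟨s₁, hs₁⟩ := h2 n
  rw [← hs₀ (s₀ ∪ s₁) Finset.subset_union_left, ← hs₁ (s₀ ∪ s₁) Finset.subset_union_right]

lemma tsum_eq {ι : Type*} {f : ι → PowerSeries ℤ} {a : PowerSeries ℤ} (h : HasSum f a) :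
    ∑' i, f i = a := by
  classical
  have hm : Summable f := ⟨a, h⟩
  have h2 : HasSum f (∑' i, f i) := hm.hasSum
  rw [hasSum_iff] at h h2
  ext n
  obtain ⟨s₀, hs₀⟩ := h n
  obtain ⟨s₁, hs₁⟩ := h2 n
  rw [← hs₀ (s₀ ∪ s₁) Finset.subset_union_left, ← hs₁ (s₀ ∪ s₁) Finset.subset_union_right]

open Finset
local notation "R" => PowerSeries ℤ


/-- the inverse of `1 - X^j`. -/
noncomputable def u (j : ℕ) : R := invOfUnit (1 - (X : R) ^ j) 1

lemma constCoeff_one_sub_X_pow {j : ℕ} (hj : 1 ≤ j) :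
    constantCoeff (1 - (X : R) ^ j) = 1 := by
  rw [map_sub, map_one, map_pow, constantCoeff_X, zero_pow (by omega), sub_zero]

lemma one_sub_mul_u {j : ℕ} (hj : 1 ≤ j) : (1 - (X : R) ^ j) * u j = 1 :=
  mul_invOfUnit _ _ (by rw [constCoeff_one_sub_X_pow hj]; rfl)

lemma X_dvd_u_sub_one {j : ℕ} (hj : 1 ≤ j) : (X : R) ^ j ∣ u j - 1 := by
  refine ⟨u j, ?_⟩
  conv_lhs => rw [← one_sub_mul_u hj]
  ring

/-- coeff n of a multiple of X^N vanishes for n < N -/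
lemma coeff_eq_of_dvd {N : ℕ} {a b : R} (h : (X : R) ^ N ∣ a - b) {n : ℕ} (hn : n < N) :
    coeff n a = coeff n b := by
  have := (X_pow_dvd_iff).1 h n hn
  rw [map_sub] at this
  linarith [this]

lemma dvd_mul_compat {N : ℕ} {a b c d : R} (h1 : (X : R) ^ N ∣ a - b) (h2 : (X : R) ^ N ∣ c - d) :
    (X : R) ^ N ∣ a * c - b * d := by
  have : a * c - b * d = (a - b) * c + b * (c - d) := by ring
  rw [this]
  exact dvd_add (h1.mul_right c) (h2.mul_left b)

lemma dvd_mul_right_compat {N : ℕ} {a b : R} (c : R) (h1 : (X : R) ^ N ∣ a - b) :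
    (X : R) ^ N ∣ a * c - b * c := by
  exact dvd_mul_compat h1 (by simp)

lemma prod_one_dvd {ι : Type*} {N : ℕ} (g : ι → R) (s : Finset ι)
    (hg : ∀ i ∈ s, (X : R) ^ N ∣ g i - 1) :
    (X : R) ^ N ∣ (∏ i ∈ s, g i) - 1 := by
  classical
  induction s using Finset.induction_on with
  | empty => simp
  | @insert a s ha ih =>
    rw [Finset.prod_insert ha]
    have h2 := ih (fun i hi => hg i (Finset.mem_insert_of_mem hi))
    simpa using dvd_mul_compat (hg a (Finset.mem_insert_self a s)) h2

/-- products of factors congruent to 1 stay put on small coefficients -/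
lemma prod_stab {ι : Type*} {N : ℕ} (g : ι → R) (s₀ s : Finset ι) (hsub : s₀ ⊆ s)
    (hg : ∀ i ∈ s, i ∉ s₀ → (X : R) ^ N ∣ g i - 1) :
    (X : R) ^ N ∣ (∏ i ∈ s, g i) - (∏ i ∈ s₀, g i) := by
  classical
  rw [← Finset.prod_sdiff hsub]
  have h := prod_one_dvd g (s \ s₀) (fun i hi => hg i (Finset.mem_sdiff.1 hi).1 (Finset.mem_sdiff.1 hi).2)
  have : (∏ i ∈ s \ s₀, g i) * ∏ i ∈ s₀, g i - ∏ i ∈ s₀, g i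
      = ((∏ i ∈ s \ s₀, g i) - 1) * ∏ i ∈ s₀, g i := by ring
  rw [this]
  exact h.mul_right _

lemma one_sub_prod {ι : Type*} {N : ℕ} (e : ι → ℕ) (s : Finset ι) (he : ∀ i ∈ s, N ≤ e i) :
    (X : R) ^ N ∣ (∏ i ∈ s, (1 - (X : R) ^ (e i))) - 1 := by
  classical
  induction s using Finset.induction_on with
  | empty => simp
  | @insert a s ha ih =>
    rw [Finset.prod_insert ha]
    have h1 : (X : R) ^ N ∣ (1 - (X : R) ^ (e a)) - 1 := by
      simp only [sub_sub_cancel_left, dvd_neg]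
      exact pow_dvd_pow _ (he a (Finset.mem_insert_self a s))
    have h2 := ih (fun i hi => he i (Finset.mem_insert_of_mem hi))
    simpa using dvd_mul_compat h1 h2


/-- Gaussian binomial coefficients in q = X^5, bilateral index. -/
noncomputable def G : ℕ → ℤ → R
  | 0, r => if r = 0 then 1 else 0
  | (n+1), r => if r < 0 then 0 else G n (r-1) + X ^ (5*r).toNat * G n r

lemma G_neg (n : ℕ) (r : ℤ) (h : r < 0) : G n r = 0 := by
  cases n with
  | zero => rw [G]; exact if_neg (by omega)
  | succ n => rw [G]; exact if_pos h

lemma G_succ (n : ℕ) (r : ℤ) (h : 0 ≤ r) :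
    G (n+1) r = G n (r-1) + X ^ (5*r).toNat * G n r := by
  rw [G]; exact if_neg (by omega)

lemma G_gt : ∀ (n : ℕ) (r : ℤ), (n : ℤ) < r → G n r = 0 := by
  intro n
  induction n with
  | zero => intro r h; rw [G]; exact if_neg (by omega)
  | succ n ih =>
    intro r h
    rw [G_succ n r (by push_cast at h ⊢; omega), ih (r-1) (by push_cast at h ⊢; omega),
      ih r (by push_cast at h ⊢; omega)]
    ring

lemma G_zero : ∀ n : ℕ, G n 0 = 1 := by
  intro n
  induction n with
  | zero => rw [G]; exact if_pos rfl
  | succ n ih => rw [G_succ n 0 le_rfl, G_neg n _ (by omega), ih]; simp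

lemma X_pow_toNat_add (a b : ℤ) (ha : 0 ≤ a) (hb : 0 ≤ b) :
    (X : R) ^ a.toNat * X ^ b.toNat = X ^ (a+b).toNat := by
  rw [← pow_add]; congr 1; omega

lemma G_pascal2 : ∀ (n : ℕ) (r : ℤ),
    G (n+1) r = X ^ (5*((n:ℤ)+1-r)).toNat * G n (r-1) + G n r := by
  intro n
  induction n with
  | zero =>
    intro r
    rcases lt_trichotomy r 0 with h | h | h
    · rw [G_neg 1 r h, G_neg 0 r h, G_neg 0 (r-1) (by omega)]; ring
    · subst h
      rw [G_zero 1, G_zero 0, G_neg 0 (0-1 : ℤ) (by omega)]; ring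
    · rcases eq_or_lt_of_le (by omega : (1:ℤ) ≤ r) with h1 | h1
      · rw [← h1, G_succ 0 1 (by omega), show (1:ℤ)-1 = 0 from by ring, G_zero 0,
          G_gt 0 1 (by norm_num)]
        simp
      · rw [G_gt 1 r (by push_cast; omega), G_gt 0 r (by push_cast; omega),
          G_gt 0 (r-1) (by push_cast; omega)]
        ring
  | succ n ih =>
    intro r
    rcases lt_trichotomy r 0 with h | h | h
    · rw [G_neg _ r h, G_neg _ r h, G_neg _ (r-1) (by omega)]; ring
    · subst h
      rw [G_zero, G_zero, G_neg (n+1) (0-1 : ℤ) (by omega)]; ring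
    · by_cases hr : r ≤ (n:ℤ) + 1
      · conv_lhs => rw [G_succ (n+1) r (by omega), ih (r-1), ih r]
        conv_rhs => rw [G_succ n (r-1) (by omega), G_succ n r (by omega)]
        have harg : (5*((n:ℤ)+1-(r-1))).toNat = (5*((↑(n+1):ℤ)+1-r)).toNat := by
          push_cast; omega
        rw [harg]
        have e1 : (X:R)^(5*r).toNat * X^(5*((n:ℤ)+1-r)).toNat
            = X^((5*((↑(n+1):ℤ)+1-r)).toNat) * X^((5*(r-1)).toNat) := by
          rw [X_pow_toNat_add _ _ (by omega) (by omega),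
            X_pow_toNat_add _ _ (by push_cast; omega) (by omega)]
          congr 1; push_cast; omega
        linear_combination (G n (r-1)) * e1
      · by_cases hr2 : r = (n:ℤ) + 2
        · rw [G_succ (n+1) r (by omega), G_gt (n+1) r (by push_cast; omega),
            show (5*((↑(n+1):ℤ)+1-r)).toNat = 0 from by push_cast; omega]
          ring
        · rw [G_gt (n+1+1) r (by push_cast; omega), G_gt (n+1) r (by push_cast; omega),
            G_gt (n+1) (r-1) (by push_cast; omega)]
          ring

lemma G_of_ne_zero (r : ℤ) (h : r ≠ 0) : G 0 r = 0 := by rw [G]; exact if_neg h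

lemma G_symm : ∀ (n : ℕ) (r : ℤ), G n r = G n ((n:ℤ) - r) := by
  intro n
  induction n with
  | zero =>
    intro r
    rcases eq_or_ne r 0 with h | h
    · subst h; norm_num
    · rw [G_of_ne_zero r h, G_of_ne_zero _ (by push_cast; omega)]
  | succ n ih =>
    intro r
    by_cases h1 : r < 0
    · rw [G_neg _ r h1, G_gt (n+1) _ (by push_cast; omega)]
    by_cases h2 : ((n+1:ℕ) : ℤ) < r
    · rw [G_gt (n+1) r h2, G_neg (n+1) _ (by push_cast; omega)]
    push_neg at h1 h2
    rw [G_succ n r h1, G_pascal2 n (((n+1:ℕ):ℤ) - r),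
      show ((n+1:ℕ):ℤ) - r - 1 = (n:ℤ) - r from by push_cast; ring,
      show (5*((n:ℤ)+1-(((n+1:ℕ):ℤ)-r))).toNat = (5*r).toNat from by push_cast; omega,
      show (((n+1:ℕ):ℤ) - r) = (n:ℤ) - (r-1) from by push_cast; ring,
      ← ih r, ← ih (r-1)]
    ring

/-- `(q;q)_k` with `q = X^5`. -/
noncomputable def Dq (k : ℕ) : R := ∏ j ∈ range k, (1 - (X:R) ^ (5*j+5))

lemma G_diag : ∀ n : ℕ, G n (n:ℤ) = 1 := by
  intro n
  induction n with
  | zero => exact G_zero 0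
  | succ n ih =>
    rw [G_succ n _ (by positivity), G_gt n ((n+1:ℕ):ℤ) (by push_cast; omega),
      show ((n+1:ℕ):ℤ) - 1 = (n:ℤ) from by push_cast; ring, ih]
    ring

lemma G_mul_D : ∀ (n : ℕ), ∀ r : ℕ, r ≤ n →
    G n (r:ℤ) * Dq r = ∏ j ∈ range r, (1 - (X:R) ^ (5*(n - r + j)+5)) := by
  intro n
  induction n with
  | zero =>
    intro r hr
    interval_cases r
    simp [Dq, G_zero]
  | succ n ih =>
    intro r hr
    rcases eq_or_lt_of_le hr with hr1 | hr1
    · subst hr1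
      rw [G_diag (n+1), one_mul, Dq]
      refine prod_congr rfl (fun j hj => ?_)
      have : 5*(n+1-(n+1)+j)+5 = 5*j+5 := by omega
      rw [this]
    · -- r ≤ n
      have hrn : r ≤ n := by omega
      rcases Nat.eq_zero_or_pos r with h0 | h0
      · subst h0; simp [Dq, G_zero]
      obtain ⟨r', hr'⟩ : ∃ r', r = r' + 1 := ⟨r - 1, by omega⟩
      subst hr'
      have hrn' : r' + 1 ≤ n := hrn
      rw [G_pascal2 n ((r'+1:ℕ):ℤ), add_mul,
        show (((r'+1:ℕ):ℤ)-1) = ((r':ℕ):ℤ) from by push_cast; ring]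
      rw [show (Dq (r'+1)) = Dq r' * (1 - (X:R)^(5*r'+5)) from by rw [Dq, Dq, prod_range_succ]]
      have hih1 := ih r' (by omega)
      have hih2 := ih (r'+1) hrn
      rw [show (5*((n:ℤ)+1-((r'+1:ℕ):ℤ))).toNat = 5*(n-r') from by push_cast; omega]
      have key : (X:R) ^ (5*(n-r')) * G n ((r':ℕ):ℤ) * (Dq r' * (1 - (X:R)^(5*r'+5)))
            + G n ((r'+1:ℕ):ℤ) * (Dq r' * (1 - (X:R)^(5*r'+5)))
          = (X:R) ^ (5*(n-r')) * (1 - (X:R)^(5*r'+5)) * (G n ((r':ℕ):ℤ) * Dq r')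
            + (G n ((r'+1:ℕ):ℤ) * Dq (r'+1)) := by
        rw [show (Dq (r'+1)) = Dq r' * (1 - (X:R)^(5*r'+5)) from by rw [Dq, Dq, prod_range_succ]]
        ring
      rw [key, hih1, hih2]
      set P : R := ∏ j ∈ range r', (1 - (X:R) ^ (5*(n - r' + j)+5)) with hP
      -- second term
      rw [prod_range_succ' (fun j => (1 - (X:R) ^ (5*(n - (r'+1) + j)+5))) r']
      have c1 : ∀ j ∈ range r', (1 - (X:R) ^ (5*(n - (r'+1) + (j+1))+5))
          = (1 - (X:R) ^ (5*(n - r' + j)+5)) := by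
        intro j hj
        have : 5*(n - (r'+1) + (j+1))+5 = 5*(n - r' + j)+5 := by omega
        rw [this]
      rw [prod_congr rfl c1, ← hP]
      have c2 : 5*(n-(r'+1)+0)+5 = 5*(n-r') := by omega
      rw [c2]
      -- RHS
      rw [prod_range_succ (fun j => (1 - (X:R) ^ (5*(n + 1 - (r'+1) + j)+5))) r']
      have c3 : ∀ j ∈ range r', (1 - (X:R) ^ (5*(n + 1 - (r'+1) + j)+5))
          = (1 - (X:R) ^ (5*(n - r' + j)+5)) := by
        intro j hj
        have : 5*(n + 1 - (r'+1) + j)+5 = 5*(n - r' + j)+5 := by omega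
        rw [this]
      rw [prod_congr rfl c3, ← hP]
      have c4 : 5*(n+1-(r'+1)+r')+5 = 5*n+5 := by omega
      rw [c4]
      have hx : (X:R)^(5*(n-r')) * (X:R)^(5*r'+5) = (X:R)^(5*n+5) := by
        rw [← pow_add]; congr 1; omega
      linear_combination (-P) * hx

lemma DG_nonpos (k : ℕ) (m : ℤ) (hm : m ≤ 0) (hk : m.natAbs ≤ k) :
    (X:R)^(5*(k - m.natAbs)+5) ∣ Dq k * G (2*k) ((k:ℤ)+m) - 1 := by
  set a : ℕ := k - m.natAbs with ha
  set b : ℕ := m.natAbs with hb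
  have hk' : k = a + b := by omega
  have harg : ((k:ℤ)+m) = ((a:ℕ):ℤ) := by push_cast; omega
  rw [harg]
  have hG := G_mul_D (2*k) a (by omega)
  have hDq : Dq k = Dq a * ∏ j ∈ range b, (1 - (X:R)^(5*(a+j)+5)) := by
    rw [hk', Dq, Dq, prod_range_add]
  have hre : Dq k * G (2*k) ((a:ℕ):ℤ)
      = (∏ j ∈ range a, (1 - (X:R) ^ (5*(2*k - a + j)+5)))
        * ∏ j ∈ range b, (1 - (X:R)^(5*(a+j)+5)) := by
    rw [hDq, ← hG]; ring
  rw [hre]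
  have h1 : (X:R)^(5*a+5) ∣ (∏ j ∈ range a, (1 - (X:R) ^ (5*(2*k - a + j)+5))) - 1 :=
    one_sub_prod _ _ (fun j hj => by omega)
  have h2 : (X:R)^(5*a+5) ∣ (∏ j ∈ range b, (1 - (X:R)^(5*(a+j)+5))) - 1 :=
    one_sub_prod _ _ (fun j hj => by omega)
  simpa using dvd_mul_compat h1 h2

lemma DG (k : ℕ) (m : ℤ) (hk : m.natAbs ≤ k) :
    (X:R)^(5*(k - m.natAbs)+5) ∣ Dq k * G (2*k) ((k:ℤ)+m) - 1 := by
  rcases le_or_gt m 0 with h | h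
  · exact DG_nonpos k m h hk
  · rw [G_symm (2*k) ((k:ℤ)+m), show ((2*k:ℕ):ℤ) - ((k:ℤ)+m) = (k:ℤ) + (-m) from by
      push_cast; ring]
    have := DG_nonpos k (-m) (by omega) (by rwa [Int.natAbs_neg])
    rwa [Int.natAbs_neg] at this

noncomputable def sg (m : ℤ) : R := @C ℤ _ ((-1)^m.natAbs)

def e (m : ℤ) : ℕ := (m*(5*m+1)/2).toNat

lemma e_spec (m : ℤ) : 2*((e m : ℤ)) = m*(5*m+1) := by
  have hnn : 0 ≤ m*(5*m+1) := by
    rcases le_or_gt 0 m with h | h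
    · exact mul_nonneg h (by omega)
    · rw [show m*(5*m+1) = (-m)*(-(5*m+1)) from by ring]
      exact mul_nonneg (by omega) (by omega)
  obtain ⟨j, hj⟩ : ∃ j, m*(5*m+1) = 2*j := by
    rcases Int.even_or_odd m with ⟨c, hc⟩ | ⟨c, hc⟩
    · exact ⟨c*(10*c+1), by subst hc; ring⟩
    · exact ⟨(2*c+1)*(5*c+3), by subst hc; ring⟩
  rw [e, hj]
  omega

lemma e_lin (m : ℤ) : 2*((e (m+1) : ℤ)) = 2*((e m : ℤ)) + 10*m + 6 := by
  linear_combination e_spec (m+1) - e_spec m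

lemma sg_succ (m : ℤ) : sg (m+1) = - sg m := by
  have key : ((-1:ℤ))^(m+1).natAbs = -((-1)^m.natAbs) := by
    rcases Int.even_or_odd m with h | h
    · rw [Even.neg_one_pow (Int.natAbs_even.2 h), Odd.neg_one_pow (Int.natAbs_odd.2 h.add_one)]
    · rw [Odd.neg_one_pow (Int.natAbs_odd.2 h), Even.neg_one_pow (Int.natAbs_even.2 h.add_one)]
      ring
  rw [sg, sg, key, map_neg]

lemma sg_pred (m : ℤ) : sg (m-1) = - sg m := by
  have h := sg_succ (m-1)
  rw [sub_add_cancel] at h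
  rw [h, neg_neg]

lemma sg_neg_idx (m : ℤ) : sg (-m) = sg m := by rw [sg, sg, Int.natAbs_neg]

lemma sum_shift (a b : ℤ) (h : ℤ → R) :
    ∑ m ∈ Finset.Icc a b, h (m+1) = ∑ m ∈ Finset.Icc (a+1) (b+1), h m := by
  rw [← Finset.map_add_right_Icc a b 1, Finset.sum_map]
  rfl

lemma sum_shift_down (a b : ℤ) (h : ℤ → R) :
    ∑ m ∈ Finset.Icc a b, h (m-1) = ∑ m ∈ Finset.Icc (a-1) (b-1), h m := by
  have h0 := sum_shift (a-1) (b-1) (fun m => h (m-1))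
  simp only [add_sub_cancel_right] at h0
  rw [sub_add_cancel, sub_add_cancel] at h0
  exact h0.symm

lemma sum_ext (a b a' b' : ℤ) (h : ℤ → R) (haa : a' ≤ a) (hbb : b ≤ b')
    (hz : ∀ m, a' ≤ m → m ≤ b' → (m < a ∨ b < m) → h m = 0) :
    ∑ m ∈ Finset.Icc a b, h m = ∑ m ∈ Finset.Icc a' b', h m := by
  apply Finset.sum_subset (Finset.Icc_subset_Icc haa hbb)
  intro x hx hnx
  simp only [Finset.mem_Icc] at hx hnx
  exact hz x hx.1 hx.2 (by omega)

noncomputable def T (k : ℕ) : R :=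
  ∑ m ∈ Finset.Icc (-(k:ℤ)) (k:ℤ), sg m * X^(e m) * G (2*k) ((k:ℤ) + m)

noncomputable def Th (k : ℕ) : R :=
  ∑ m ∈ Finset.Icc (-(k:ℤ)-1) ((k:ℤ)+1), sg m * X^(e m) * G (2*k+1) ((k:ℤ) + m)

lemma step2 (k : ℕ) : Th k = (1 - X^(5*k+3)) * T k := by
  rw [Th]
  have expand : ∀ m ∈ Finset.Icc (-(k:ℤ)-1) ((k:ℤ)+1),
      sg m * X^(e m) * G (2*k+1) ((k:ℤ)+m)
        = (fun m' => sg m' * X^(e m' + (5*((k:ℤ)+1-m')).toNat) * G (2*k) ((k:ℤ)+(m'-1))) m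
          + sg m * X^(e m) * G (2*k) ((k:ℤ)+m) := by
    intro m hm
    simp only []
    rw [G_pascal2 (2*k) ((k:ℤ)+m),
      show (5*(((2*k:ℕ):ℤ)+1-((k:ℤ)+m))).toNat = (5*((k:ℤ)+1-m)).toNat from by push_cast; omega,
      show (k:ℤ)+m-1 = (k:ℤ)+(m-1) from by ring, pow_add]
    ring
  rw [Finset.sum_congr rfl expand, Finset.sum_add_distrib]
  have sumA : ∑ m ∈ Finset.Icc (-(k:ℤ)-1) ((k:ℤ)+1), sg m * X^(e m) * G (2*k) ((k:ℤ)+m)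
      = T k := by
    rw [T]
    refine (sum_ext (-(k:ℤ)) (k:ℤ) (-(k:ℤ)-1) ((k:ℤ)+1) _ (by omega) (by omega) ?_).symm
    intro m h1 h2 h3
    rcases h3 with h3 | h3
    · rw [G_neg (2*k) ((k:ℤ)+m) (by omega)]; ring
    · rw [G_gt (2*k) ((k:ℤ)+m) (by push_cast; omega)]; ring
  have sumB : ∑ m ∈ Finset.Icc (-(k:ℤ)-1) ((k:ℤ)+1),
      (fun m' => sg m' * X^(e m' + (5*((k:ℤ)+1-m')).toNat) * G (2*k) ((k:ℤ)+(m'-1))) m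
      = - (X^(5*k+3) * T k) := by
    set H : ℤ → R := fun m' => sg (m'+1) * X^(e (m'+1) + (5*((k:ℤ)-m')).toNat) * G (2*k) ((k:ℤ)+m') with hH
    have conv1 : ∀ m ∈ Finset.Icc (-(k:ℤ)-1) ((k:ℤ)+1),
        (fun m' => sg m' * X^(e m' + (5*((k:ℤ)+1-m')).toNat) * G (2*k) ((k:ℤ)+(m'-1))) m
        = H (m-1) := by
      intro m hm
      rw [hH]
      simp only []
      rw [sub_add_cancel, show (k:ℤ) - (m-1) = (k:ℤ)+1-m from by ring]
    rw [Finset.sum_congr rfl conv1, sum_shift_down _ _ H, hH]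
    have shrink : ∑ m ∈ Finset.Icc (-(k:ℤ)-1-1) ((k:ℤ)+1-1),
        (fun m' => sg (m'+1) * X^(e (m'+1) + (5*((k:ℤ)-m')).toNat) * G (2*k) ((k:ℤ)+m')) m
        = ∑ m ∈ Finset.Icc (-(k:ℤ)) ((k:ℤ)),
        sg (m+1) * X^(e (m+1) + (5*((k:ℤ)-m)).toNat) * G (2*k) ((k:ℤ)+m) := by
      simp only []
      refine (sum_ext (-(k:ℤ)) (k:ℤ) (-(k:ℤ)-1-1) ((k:ℤ)+1-1) _ (by omega) (by omega) ?_).symm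
      intro m h1 h2 h3
      rw [G_neg (2*k) ((k:ℤ)+m) (by omega)]
      ring
    rw [shrink]
    have conv2 : ∀ m ∈ Finset.Icc (-(k:ℤ)) ((k:ℤ)),
        sg (m+1) * X^(e (m+1) + (5*((k:ℤ)-m)).toNat) * G (2*k) ((k:ℤ)+m)
        = - (X^(5*k+3) * (sg m * X^(e m) * G (2*k) ((k:ℤ)+m))) := by
      intro m hm
      simp only [Finset.mem_Icc] at hm
      have he := e_lin m
      rw [sg_succ, show e (m+1) + (5*((k:ℤ)-m)).toNat = (5*k+3) + e m from by omega, pow_add]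
      ring
    rw [Finset.sum_congr rfl conv2, Finset.sum_neg_distrib, ← Finset.mul_sum, ← T]
  rw [sumA, sumB]
  ring

lemma step1 (k : ℕ) : T (k+1) = (1 - X^(5*k+2)) * Th k := by
  rw [T, show ((k+1:ℕ):ℤ) = (k:ℤ)+1 from by push_cast; ring,
    show (2*(k+1)) = 2*k+1+1 from by ring,
    show (-((k:ℤ)+1)) = -(k:ℤ)-1 from by ring]
  have expand : ∀ m ∈ Finset.Icc (-(k:ℤ)-1) ((k:ℤ)+1),
      sg m * X^(e m) * G (2*k+1+1) ((k:ℤ)+1+m)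
        = sg m * X^(e m) * G (2*k+1) ((k:ℤ)+m)
          + (fun m' => sg m' * X^(e m' + (5*((k:ℤ)+1+m')).toNat) * G (2*k+1) ((k:ℤ)+(m'+1))) m := by
    intro m hm
    simp only [Finset.mem_Icc] at hm
    simp only []
    rw [G_succ (2*k+1) ((k:ℤ)+1+m) (by omega),
      show (k:ℤ)+1+m-1 = (k:ℤ)+m from by ring,
      show (k:ℤ)+(m+1) = (k:ℤ)+1+m from by ring, pow_add]
    ring
  rw [Finset.sum_congr rfl expand, Finset.sum_add_distrib]
  have sumA : ∑ m ∈ Finset.Icc (-(k:ℤ)-1) ((k:ℤ)+1), sg m * X^(e m) * G (2*k+1) ((k:ℤ)+m)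
      = Th k := by rw [Th]
  have sumB : ∑ m ∈ Finset.Icc (-(k:ℤ)-1) ((k:ℤ)+1),
      (fun m' => sg m' * X^(e m' + (5*((k:ℤ)+1+m')).toNat) * G (2*k+1) ((k:ℤ)+(m'+1))) m
      = - (X^(5*k+2) * Th k) := by
    set H : ℤ → R := fun m' => sg (m'-1) * X^(e (m'-1) + (5*((k:ℤ)+m')).toNat) * G (2*k+1) ((k:ℤ)+m') with hH
    have conv1 : ∀ m ∈ Finset.Icc (-(k:ℤ)-1) ((k:ℤ)+1),
        (fun m' => sg m' * X^(e m' + (5*((k:ℤ)+1+m')).toNat) * G (2*k+1) ((k:ℤ)+(m'+1))) m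
        = H (m+1) := by
      intro m hm
      rw [hH]
      simp only []
      rw [add_sub_cancel_right, show (k:ℤ)+(m+1) = (k:ℤ)+1+m from by ring]
    rw [Finset.sum_congr rfl conv1, sum_shift _ _ H]
    have ext1 : ∑ m ∈ Finset.Icc (-(k:ℤ)-1+1) ((k:ℤ)+1+1), H m
        = ∑ m ∈ Finset.Icc (-(k:ℤ)-1) ((k:ℤ)+1+1), H m := by
      refine sum_ext _ _ _ _ H (by omega) (by omega) ?_
      intro m h1 h2 h3
      rw [hH]
      simp only []
      rw [G_neg (2*k+1) ((k:ℤ)+m) (by omega)]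
      ring
    have ext2 : ∑ m ∈ Finset.Icc (-(k:ℤ)-1) ((k:ℤ)+1), H m
        = ∑ m ∈ Finset.Icc (-(k:ℤ)-1) ((k:ℤ)+1+1), H m := by
      refine sum_ext _ _ _ _ H (by omega) (by omega) ?_
      intro m h1 h2 h3
      rw [hH]
      simp only []
      rw [G_gt (2*k+1) ((k:ℤ)+m) (by push_cast; omega)]
      ring
    rw [ext1, ← ext2, hH]
    have conv2 : ∀ m ∈ Finset.Icc (-(k:ℤ)-1) ((k:ℤ)+1),
        (fun m' => sg (m'-1) * X^(e (m'-1) + (5*((k:ℤ)+m')).toNat) * G (2*k+1) ((k:ℤ)+m')) m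
        = - (X^(5*k+2) * (sg m * X^(e m) * G (2*k+1) ((k:ℤ)+m))) := by
      intro m hm
      simp only [Finset.mem_Icc] at hm
      simp only []
      rcases eq_or_lt_of_le hm.1 with hlo | hlo
      · rw [G_neg (2*k+1) ((k:ℤ)+m) (by omega)]
        ring
      · have he := e_lin (m-1)
        rw [sub_add_cancel] at he
        rw [sg_pred, show e (m-1) + (5*((k:ℤ)+m)).toNat = (5*k+2) + e m from by omega, pow_add]
        ring
    rw [Finset.sum_congr rfl conv2, Finset.sum_neg_distrib, ← Finset.mul_sum, ← Th]
  rw [sumA, sumB]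
  ring

lemma T_eq : ∀ k : ℕ, T k = ∏ r ∈ range k, ((1 - (X:R)^(5*r+2)) * (1 - X^(5*r+3))) := by
  intro k
  induction k with
  | zero =>
    rw [T]
    norm_num
    rw [G_zero, show e 0 = 0 from by have := e_spec 0; omega, sg]
    norm_num
  | succ k ih =>
    rw [step1 k, step2 k, ih, prod_range_succ]
    ring

lemma hasProd_partial {ι : Type*} (g : ι → R) (S : ℕ → Finset ι)
    (hS : ∀ n i, i ∉ S n → (X:R)^(n+1) ∣ g i - 1) :
    HasProd g (mk fun n => coeff n (∏ i ∈ S n, g i)) := by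
  rw [hasProd_iff]
  intro n
  refine ⟨S n, fun s hs => ?_⟩
  rw [coeff_mk]
  exact coeff_eq_of_dvd (prod_stab g (S n) s hs (fun i _ hi => hS n i hi)) (by omega)

lemma hasSum_partial {ι : Type*} (g : ι → R) (S : ℕ → Finset ι)
    (hS : ∀ n i, i ∉ S n → (X:R)^(n+1) ∣ g i) :
    HasSum g (mk fun n => coeff n (∑ i ∈ S n, g i)) := by
  rw [hasSum_iff]
  intro n
  refine ⟨S n, fun s hs => ?_⟩
  rw [coeff_mk, map_sum, map_sum]
  refine (Finset.sum_subset hs ?_).symm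
  intro i _ hi
  exact (X_pow_dvd_iff.1 (hS n i hi)) n (by omega)

def e' (m : ℤ) : ℕ := (m*(5*m-1)/2).toNat

lemma e'_spec (m : ℤ) : 2*((e' m : ℤ)) = m*(5*m-1) := by
  have hnn : 0 ≤ m*(5*m-1) := by
    rcases le_or_gt 0 m with h | h
    · rcases eq_or_lt_of_le h with h0 | h0
      · simp [← h0]
      · exact mul_nonneg h (by omega)
    · rw [show m*(5*m-1) = (-m)*(-(5*m-1)) from by ring]
      exact mul_nonneg (by omega) (by omega)
  obtain ⟨j, hj⟩ : ∃ j, m*(5*m-1) = 2*j := by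
    rcases Int.even_or_odd m with ⟨c, hc⟩ | ⟨c, hc⟩
    · exact ⟨c*(10*c-1), by subst hc; ring⟩
    · exact ⟨(2*c+1)*(5*c+2), by subst hc; ring⟩
  rw [e', hj]
  omega

lemma e'_neg (m : ℤ) : e' (-m) = e m := by
  have h1 := e'_spec (-m)
  have h2 := e_spec m
  have : (-m)*(5*(-m)-1) = m*(5*m+1) := by ring
  rw [this] at h1
  omega

lemma e'_big {n : ℕ} {m : ℤ} (hm : (n:ℤ)+2 ≤ m ∨ m ≤ -((n:ℤ))-2) : n+1 ≤ e' m := by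
  have h := e'_spec m
  rcases hm with hm | hm
  · nlinarith [h, hm]
  · nlinarith [h, hm]

lemma e_big (m : ℤ) : 2 * m.natAbs ≤ e m := by
  have h := e_spec m
  have key : 0 ≤ m*(m-1) := by
    rcases le_or_gt 1 m with h1 | h1
    · exact mul_nonneg (by omega) (by omega)
    · rw [show m*(m-1) = (-m)*(-(m-1)) from by ring]
      exact mul_nonneg (by omega) (by omega)
  have key2 : 0 ≤ m*(m+1) := by
    rcases le_or_gt 0 m with h1 | h1
    · exact mul_nonneg (by omega) (by omega)
    · rw [show m*(m+1) = (-m)*(-(m+1)) from by ring]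
      exact mul_nonneg (by omega) (by omega)
  rcases le_or_gt 0 m with hm | hm
  · have h4 : 4*m ≤ 2*((e m : ℤ)) := by nlinarith [key, h, hm]
    omega
  · have h4 : -4*m ≤ 2*((e m : ℤ)) := by nlinarith [key2, h, hm]
    omega

lemma block5 (f : ℕ → R) : ∀ k : ℕ, ∏ j ∈ range (5*k), f j
    = ∏ r ∈ range k, (f (5*r) * f (5*r+1) * f (5*r+2) * f (5*r+3) * f (5*r+4)) := by
  intro k
  induction k with
  | zero => simp
  | succ k ih =>
    rw [show 5*(k+1) = 5*k+1+1+1+1+1 from by ring, prod_range_succ, prod_range_succ,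
      prod_range_succ, prod_range_succ, prod_range_succ, ih, prod_range_succ]
    ring_nf

lemma W_mul_B (k : ℕ) :
    (∏ j ∈ range (5*k), (1 - (X:R)^(j+1))) * (∏ j ∈ range (5*k), u (j+1)) = 1 := by
  rw [← prod_mul_distrib]
  exact Finset.prod_eq_one (fun j _ => one_sub_mul_u (by omega))

lemma A_mul_W (k : ℕ) :
    (∏ r ∈ range k, (u (5*r+1) * u (5*r+4))) * (∏ j ∈ range (5*k), (1 - (X:R)^(j+1)))
    = ∏ r ∈ range k, ((1 - (X:R)^(5*r+5)) * ((1 - X^(5*r+2)) * (1 - X^(5*r+3)))) := by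
  rw [block5 (fun j => 1 - (X:R)^(j+1)) k, ← prod_mul_distrib]
  refine prod_congr rfl (fun r _ => ?_)
  have h1 := one_sub_mul_u (j := 5*r+1) (by omega)
  have h4 := one_sub_mul_u (j := 5*r+4) (by omega)
  calc u (5*r+1) * u (5*r+4) *
        ((1 - (X:R)^(5*r+1)) * (1 - X^(5*r+1+1)) * (1 - X^(5*r+2+1)) * (1 - X^(5*r+3+1))
          * (1 - X^(5*r+4+1)))
      = ((1 - (X:R)^(5*r+1)) * u (5*r+1)) * ((1 - X^(5*r+4)) * u (5*r+4))
          * ((1 - X^(5*r+5)) * ((1 - X^(5*r+2)) * (1 - X^(5*r+3)))) := by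
        rw [show 5*r+1+1 = 5*r+2 from by ring, show 5*r+2+1 = 5*r+3 from by ring,
          show 5*r+3+1 = 5*r+4 from by ring, show 5*r+4+1 = 5*r+5 from by ring]
        ring
    _ = (1 - (X:R)^(5*r+5)) * ((1 - X^(5*r+2)) * (1 - X^(5*r+3))) := by
        rw [h1, h4]; ring

noncomputable def term (m : ℤ) : R := @C ℤ _ ((-1)^m.natAbs) * X^(e' m)

noncomputable def SSer : R := mk fun n => coeff n (∑ m ∈ Finset.Icc (-(n:ℤ)-1) ((n:ℤ)+1), term m)

noncomputable def ASer : R := mk fun n => coeff n (∏ r ∈ range (n+1), (u (5*r+1) * u (5*r+4)))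

def embS : ℕ ↪ {i : ℕ // 1 ≤ i} := ⟨fun j => ⟨j+1, by omega⟩, by intro a b hab; simpa using hab⟩

noncomputable def BSer : R := mk fun n => coeff n (∏ i ∈ (range (n+1)).map embS, u i.val)

lemma term_dvd {N : ℕ} {m : ℤ} (h : (N:ℤ)+2 ≤ m ∨ m ≤ -((N:ℤ))-2) : (X:R)^(N+1) ∣ term m :=
  ((pow_dvd_pow X (by have := e'_big h; omega)).trans (Dvd.intro_left _ rfl))

lemma coeff_S_stab (m' N : ℕ) (h : m' ≤ N) :
    coeff m' (∑ m ∈ Finset.Icc (-(m':ℤ)-1) ((m':ℤ)+1), term m)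
      = coeff m' (∑ m ∈ Finset.Icc (-(N:ℤ)-1) ((N:ℤ)+1), term m) := by
  rw [map_sum, map_sum]
  apply Finset.sum_subset (Finset.Icc_subset_Icc (by omega) (by omega))
  intro m hm hnm
  simp only [Finset.mem_Icc] at hm hnm
  have hb : (m':ℤ)+2 ≤ m ∨ m ≤ -((m':ℤ))-2 := by omega
  exact X_pow_dvd_iff.1 (term_dvd hb) m' (by omega)

lemma SSer_dvd (n : ℕ) :
    (X:R)^(n+1) ∣ SSer - ∑ m ∈ Finset.Icc (-(n:ℤ)-1) ((n:ℤ)+1), term m := by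
  rw [X_pow_dvd_iff]
  intro m' hm'
  rw [map_sub, SSer, coeff_mk, coeff_S_stab m' n (by omega), sub_self]

lemma embS_val_big {N : ℕ} {i : {i : ℕ // 1 ≤ i}} (h : i ∉ (range N).map embS) :
    N+1 ≤ i.val := by
  by_contra hc
  push_neg at hc
  have h1 : 1 ≤ i.val := i.prop
  refine h (Finset.mem_map.2 ⟨i.val - 1, Finset.mem_range.2 (by omega), Subtype.ext ?_⟩)
  show i.val - 1 + 1 = i.val
  omega

lemma BSer_dvd (n : ℕ) :
    (X:R)^(n+1) ∣ BSer - ∏ j ∈ range (5*(n+1)), u (j+1) := by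
  rw [X_pow_dvd_iff]
  intro m' hm'
  have hsub : (range (m'+1)).map embS ⊆ (range (5*(n+1))).map embS :=
    Finset.map_subset_map.2 (Finset.range_subset_range.2 (by omega))
  have hstab := prod_stab (fun i : {i : ℕ // 1 ≤ i} => u i.val)
    ((range (m'+1)).map embS) ((range (5*(n+1))).map embS) hsub
    (fun i _ hi => dvd_trans
      (pow_dvd_pow X (show m'+1 ≤ (i : {i : ℕ // 1 ≤ i}).val from by
        have := embS_val_big hi; omega))
      (X_dvd_u_sub_one i.prop))
  have hc := coeff_eq_of_dvd hstab (Nat.lt_succ_self m')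
  have hmap : ∏ i ∈ (range (5*(n+1))).map embS, u i.val = ∏ j ∈ range (5*(n+1)), u (j+1) :=
    Finset.prod_map _ _ _
  rw [map_sub, BSer, coeff_mk, ← hc, hmap, sub_self]

lemma core (n : ℕ) :
    coeff n (∏ r ∈ range (n+1), (u (5*r+1) * u (5*r+4)))
      = coeff n (SSer * BSer) := by
  have hc : coeff n (SSer * BSer)
      = coeff n ((∑ m ∈ Finset.Icc (-(n:ℤ)-1) ((n:ℤ)+1), term m)
          * ∏ j ∈ range (5*(n+1)), u (j+1)) :=
    coeff_eq_of_dvd (dvd_mul_compat (SSer_dvd n) (BSer_dvd n)) (by omega)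
  rw [hc]
  set k := n+1 with hk
  have hrefl : (∑ m ∈ Finset.Icc (-(n:ℤ)-1) ((n:ℤ)+1), term m)
      = ∑ m ∈ Finset.Icc (-(k:ℤ)) (k:ℤ), sg m * X^(e m) := by
    rw [show (-(n:ℤ)-1) = -((k:ℕ):ℤ) from by push_cast; omega,
      show ((n:ℤ)+1) = ((k:ℕ):ℤ) from by push_cast; omega]
    refine Finset.sum_nbij' (fun m => -m) (fun m => -m) ?_ ?_ ?_ ?_ ?_
    · intro a ha; simp only [Finset.mem_Icc] at ha ⊢; omega
    · intro a ha; simp only [Finset.mem_Icc] at ha ⊢; omega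
    · intro a _; ring
    · intro a _; ring
    · intro a _
      rw [term, sg_neg_idx, sg,
        show e' a = e (-a) from by have := e'_neg (-a); rwa [neg_neg] at this]
  have hSk_dvd : (X:R)^(n+1) ∣ (∑ m ∈ Finset.Icc (-(k:ℤ)) (k:ℤ), sg m * X^(e m))
      - Dq k * T k := by
    rw [T, Finset.mul_sum, ← Finset.sum_sub_distrib]
    refine Finset.dvd_sum ?_
    intro m hm
    simp only [Finset.mem_Icc] at hm
    have hna : m.natAbs ≤ k := by omega
    have hDG := DG k m hna
    have hEb := e_big m
    have hexp : n+1 ≤ e m + (5*(k - m.natAbs)+5) := by omega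
    have h1 : (X:R)^(n+1) ∣ X^(e m) * (Dq k * G (2*k) ((k:ℤ)+m) - 1) :=
      dvd_trans (pow_dvd_pow X hexp) (by rw [pow_add]; exact mul_dvd_mul_left _ hDG)
    have hre : sg m * X^(e m) - Dq k * (sg m * X^(e m) * G (2*k) ((k:ℤ)+m))
        = (-(sg m)) * (X^(e m) * (Dq k * G (2*k) ((k:ℤ)+m) - 1)) := by ring
    rw [hre]
    exact Dvd.dvd.mul_left h1 _
  have hV : Dq k * T k
      = ∏ r ∈ range k, ((1 - (X:R)^(5*r+5)) * ((1 - X^(5*r+2)) * (1 - X^(5*r+3)))) := by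
    rw [T_eq k, Dq, ← prod_mul_distrib]
  have hAeq : (∏ r ∈ range k, (u (5*r+1) * u (5*r+4)))
      = (Dq k * T k) * (∏ j ∈ range (5*k), u (j+1)) := by
    calc (∏ r ∈ range k, (u (5*r+1) * u (5*r+4)))
        = (∏ r ∈ range k, (u (5*r+1) * u (5*r+4)))
          * ((∏ j ∈ range (5*k), (1 - (X:R)^(j+1))) * ∏ j ∈ range (5*k), u (j+1)) := by
          rw [W_mul_B k, mul_one]
      _ = ((∏ r ∈ range k, (u (5*r+1) * u (5*r+4)))
            * (∏ j ∈ range (5*k), (1 - (X:R)^(j+1)))) * ∏ j ∈ range (5*k), u (j+1) := by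
          ring
      _ = (Dq k * T k) * ∏ j ∈ range (5*k), u (j+1) := by
          rw [A_mul_W k, hV]
  have hfinal : (X:R)^(n+1) ∣ ((∑ m ∈ Finset.Icc (-(n:ℤ)-1) ((n:ℤ)+1), term m)
      * ∏ j ∈ range (5*(n+1)), u (j+1)) - (∏ r ∈ range (n+1), (u (5*r+1) * u (5*r+4))) := by
    rw [hrefl, hAeq]
    exact dvd_mul_right_compat _ hSk_dvd
  exact (coeff_eq_of_dvd hfinal (by omega)).symm


/-- In `ℤ⟦t⟧`,
`Π_{r=0}^∞ 1/((1-t^{5r+1})(1-t^{5r+4})) = (Σ_{m∈ℤ} (-1)^m t^{m(5m-1)/2}) · Π_{i=1}^∞ 1/(1-t^i)`,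
the bilateral sum and the infinite products converging in the `t`-adic topology;
`1/(1-t^j)` is the inverse `invOfUnit (1 - X^j) 1` of the unit `1 - t^j`. -/
theorem jacobi_specialization :
    ∏' r : ℕ, invOfUnit (1 - (X : PowerSeries ℤ) ^ (5 * r + 1)) 1 *
        invOfUnit (1 - X ^ (5 * r + 4)) 1 =
      (∑' m : ℤ, @C ℤ _ ((-1) ^ m.natAbs) * X ^ (m * (5 * m - 1) / 2).toNat) *
        ∏' i : {i : ℕ // 1 ≤ i}, invOfUnit (1 - (X : PowerSeries ℤ) ^ (i : ℕ)) 1 := by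
  have hA : HasProd (fun r : ℕ => invOfUnit (1 - (X : PowerSeries ℤ) ^ (5 * r + 1)) 1 *
      invOfUnit (1 - X ^ (5 * r + 4)) 1) ASer := by
    refine hasProd_partial (fun r : ℕ => u (5*r+1) * u (5*r+4)) (fun n => range (n+1)) ?_
    intro n r hr
    have hr' : n+1 ≤ r := by
      by_contra hcon
      exact hr (Finset.mem_range.2 (by omega))
    have h1 : (X:R)^(n+1) ∣ u (5*r+1) - 1 :=
      dvd_trans (pow_dvd_pow X (by omega)) (X_dvd_u_sub_one (by omega))
    have h4 : (X:R)^(n+1) ∣ u (5*r+4) - 1 :=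
      dvd_trans (pow_dvd_pow X (by omega)) (X_dvd_u_sub_one (by omega))
    simpa using dvd_mul_compat h1 h4
  have hS : HasSum (fun m : ℤ => @C ℤ _ ((-1) ^ m.natAbs) * X ^ (m * (5 * m - 1) / 2).toNat)
      SSer := by
    refine hasSum_partial term (fun n => Finset.Icc (-(n:ℤ)-1) ((n:ℤ)+1)) ?_
    intro n m hm
    have hb : (n:ℤ)+2 ≤ m ∨ m ≤ -((n:ℤ))-2 := by
      simp only [Finset.mem_Icc] at hm
      omega
    exact term_dvd hb
  have hB : HasProd (fun i : {i : ℕ // 1 ≤ i} =>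
      invOfUnit (1 - (X : PowerSeries ℤ) ^ (i : ℕ)) 1) BSer := by
    refine hasProd_partial (fun i : {i : ℕ // 1 ≤ i} => u i.val)
      (fun n => (range (n+1)).map embS) ?_
    intro n i hi
    exact dvd_trans (pow_dvd_pow X (show n+1 ≤ (i : {i : ℕ // 1 ≤ i}).val from by
      have := embS_val_big hi; omega)) (X_dvd_u_sub_one i.prop)
  rw [tprod_eq hA, tsum_eq hS, tprod_eq hB]
  apply PowerSeries.ext
  intro n
  rw [ASer, coeff_mk]
  exact core n

end RR
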